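/- Let T be an index set, (B_t)_{t∈T} Banach spaces, B = Π_{t∈T} B_t, X a subspace of B, and r : B → B a continuous linear map with range contained in X and r(x) = x for x ∈ X. Let S ⊆ R ⊆ T with both S and R r-admissible. Then π_R(X) is topologically isomorphic to π_S(X) × ker(π^R_S restricted to π_R(X)), via an isomorphism h with π_1 ∘ h = π^R_S|_{π_R(X)}, where π_1 is the projection onto the first factor. -/
import Mathlib


/-- The restriction map `x ↦ x|_S` from the full product to the subproduct over `S`. -/
def restr {T : Type*} {B : T → Type*} (S : Set T) (x : ∀ t, B t) : ∀ t : S, B (t : T) :=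
  fun t => x t

/-- `S ⊆ T` is `r`-admissible (with respect to the subspace `X`) if
`π_S (r z) = π_S z` whenever `π_S z ∈ π_S(X)`. -/
def RAdmissible {T : Type*} {B : T → Type*} (X : Set (∀ t, B t))
    (r : (∀ t, B t) → (∀ t, B t)) (S : Set T) : Prop :=
  ∀ z : ∀ t, B t, restr S z ∈ restr (B := B) S '' X → restr (B := B) S (r z) = restr S z

/-- The restriction map `π_S` as a continuous linear map. -/
def restrL {T : Type*} (B : T → Type*)
    [∀ t, NormedAddCommGroup (B t)] [∀ t, NormedSpace ℝ (B t)] (S : Set T) :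
    (∀ t, B t) →L[ℝ] (∀ t : S, B (t : T)) :=
  ContinuousLinearMap.pi fun s : S => ContinuousLinearMap.proj (R := ℝ) (s : T)

/-- The restriction map `π^R_S` between subproducts, for `S ⊆ R`. -/
def restr2L {T : Type*} (B : T → Type*)
    [∀ t, NormedAddCommGroup (B t)] [∀ t, NormedSpace ℝ (B t)] (S R : Set T) (hSR : S ⊆ R) :
    (∀ t : R, B (t : T)) →L[ℝ] (∀ t : S, B (t : T)) :=
  ContinuousLinearMap.pi fun s : S => ContinuousLinearMap.proj (R := ℝ) (⟨(s : T), hSR s.2⟩ : R)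

open scoped Classical

/-- Extension by zero, as a continuous linear map. -/
noncomputable def extL {T : Type*} (B : T → Type*)
    [∀ t, NormedAddCommGroup (B t)] [∀ t, NormedSpace ℝ (B t)] (S : Set T) :
    (∀ t : S, B (t : T)) →L[ℝ] (∀ t, B t) :=
  ContinuousLinearMap.pi fun t =>
    if h : t ∈ S then ContinuousLinearMap.proj (R := ℝ) (⟨t, h⟩ : S) else 0

lemma restrL_extL {T : Type*} (B : T → Type*)
    [∀ t, NormedAddCommGroup (B t)] [∀ t, NormedSpace ℝ (B t)] (S : Set T)
    (y : ∀ t : S, B (t : T)) : restrL B S (extL B S y) = y := by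
  classical
  funext s
  simp only [restrL, extL, ContinuousLinearMap.pi_apply, ContinuousLinearMap.proj_apply,
    dif_pos s.2]

theorem image_splits_as_product_with_kernel
    {T : Type*} (B : T → Type*)
    [∀ t, NormedAddCommGroup (B t)] [∀ t, NormedSpace ℝ (B t)] [∀ t, CompleteSpace (B t)]
    (X : Submodule ℝ (∀ t, B t)) (r : (∀ t, B t) →L[ℝ] (∀ t, B t))
    (hrange : ∀ z, r z ∈ X) (hfix : ∀ x ∈ X, r x = x)
    (S R : Set T) (hSR : S ⊆ R)
    (hS : RAdmissible (X : Set (∀ t, B t)) r S) (hR : RAdmissible (X : Set (∀ t, B t)) r R) :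
    ∃ h : (Submodule.map (restrL B R).toLinearMap X) ≃L[ℝ]
        (Submodule.map (restrL B S).toLinearMap X ×
          LinearMap.ker ((restr2L B S R hSR).toLinearMap.comp
            (Submodule.map (restrL B R).toLinearMap X).subtype)),
      ∀ x : Submodule.map (restrL B R).toLinearMap X,
        ((h x).1 : ∀ t : S, B (t : T)) =
          fun s : S => (x : ∀ t : R, B (t : T)) ⟨(s : T), hSR s.2⟩ := by
  classical
  set XR := Submodule.map (restrL B R).toLinearMap X with hXR
  set XS := Submodule.map (restrL B S).toLinearMap X with hXS
  set K := LinearMap.ker ((restr2L B S R hSR).toLinearMap.comp XR.subtype) with hK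
  -- the splitting map
  set p : (∀ t : S, B (t : T)) →L[ℝ] (∀ t : R, B (t : T)) :=
    (restrL B R).comp (r.comp (extL B S)) with hp
  have hres2 : ∀ w : ∀ t, B t, restr2L B S R hSR (restrL B R w) = restrL B S w := fun _ => rfl
  -- key: for y in XS, p y lies in XR and π^R_S (p y) = y
  have key : ∀ y ∈ XS, restr2L B S R hSR (p y) = y ∧ p y ∈ XR := by
    rintro y ⟨x, hx, rfl⟩
    have hz : restr (B := B) S (extL B S (restrL B S x)) ∈ restr (B := B) S '' X := by
      refine ⟨x, hx, ?_⟩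
      show (restrL B S) x = restrL B S (extL B S (restrL B S x))
      rw [restrL_extL]
    have h1 : restrL B S (r (extL B S (restrL B S x))) = restrL B S x := by
      have := hS _ hz
      show restr (B := B) S (r (extL B S (restrL B S x))) = restrL B S x
      rw [this]
      show restrL B S (extL B S (restrL B S x)) = restrL B S x
      rw [restrL_extL]
    constructor
    · show restrL B S (r (extL B S (restrL B S x))) = restrL B S x
      exact h1
    · exact ⟨r (extL B S (restrL B S x)), hrange _, rfl⟩
  have mem1 : ∀ x : XR, restr2L B S R hSR (x : ∀ t : R, B (t : T)) ∈ XS := by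
    rintro ⟨-, w, hw, rfl⟩
    exact ⟨w, hw, rfl⟩
  -- forward map
  set f1 : XR →L[ℝ] XS :=
    ((restr2L B S R hSR).comp XR.subtypeL).codRestrict XS mem1 with hf1
  have mem2 : ∀ x : XR,
      (XR.subtypeL - p.comp ((restr2L B S R hSR).comp XR.subtypeL)) x ∈ XR := by
    intro x
    exact XR.sub_mem x.2 (key _ (mem1 x)).2
  set f2a : XR →L[ℝ] XR :=
    (XR.subtypeL - p.comp ((restr2L B S R hSR).comp XR.subtypeL)).codRestrict XR mem2
    with hf2a
  have mem3 : ∀ x : XR, f2a x ∈ K := by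
    intro x
    show restr2L B S R hSR ((f2a x : XR) : ∀ t : R, B (t : T)) = 0
    have : ((f2a x : XR) : ∀ t : R, B (t : T)) =
        (x : ∀ t : R, B (t : T)) - p (restr2L B S R hSR (x : ∀ t : R, B (t : T))) := rfl
    rw [this, map_sub, (key _ (mem1 x)).1, sub_self]
  set f2 : XR →L[ℝ] K := f2a.codRestrict K mem3 with hf2
  set f : XR →L[ℝ] XS × K := f1.prod f2 with hf
  -- backward map
  set graw : (XS × K) →L[ℝ] (∀ t : R, B (t : T)) :=
    (p.comp (XS.subtypeL.comp (ContinuousLinearMap.fst ℝ XS K))) +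
      (XR.subtypeL.comp (K.subtypeL.comp (ContinuousLinearMap.snd ℝ XS K))) with hgraw
  have mem4 : ∀ y : XS × K, graw y ∈ XR := by
    rintro ⟨y, z⟩
    exact XR.add_mem (key _ y.2).2 (z : XR).2
  set g : (XS × K) →L[ℝ] XR := graw.codRestrict XR mem4 with hg
  have hgf : Function.LeftInverse g f := by
    intro x
    apply Subtype.ext
    show p (restr2L B S R hSR (x : ∀ t : R, B (t : T))) +
      ((x : ∀ t : R, B (t : T)) - p (restr2L B S R hSR (x : ∀ t : R, B (t : T)))) =
        (x : ∀ t : R, B (t : T))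
    abel
  have hfg : Function.RightInverse g f := by
    rintro ⟨y, z⟩
    have hz : restr2L B S R hSR ((z : XR) : ∀ t : R, B (t : T)) = 0 := z.2
    have hval : ((g (y, z) : XR) : ∀ t : R, B (t : T)) =
        p (y : ∀ t : S, B (t : T)) + ((z : XR) : ∀ t : R, B (t : T)) := rfl
    have h1 : restr2L B S R hSR ((g (y, z) : XR) : ∀ t : R, B (t : T)) =
        (y : ∀ t : S, B (t : T)) := by
      rw [hval, map_add, (key _ y.2).1, hz, add_zero]
    refine Prod.ext (Subtype.ext ?_) (Subtype.ext (Subtype.ext ?_))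
    · exact h1
    · show ((g (y, z) : XR) : ∀ t : R, B (t : T)) -
        p (restr2L B S R hSR ((g (y, z) : XR) : ∀ t : R, B (t : T))) =
          ((z : XR) : ∀ t : R, B (t : T))
      rw [h1, hval]
      abel
  refine ⟨ContinuousLinearEquiv.equivOfInverse f g hgf hfg, fun x => rfl⟩
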